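/- arXiv:2410.21693 — 3 statements merged into one kernel-verified Lean document; each statement's English description precedes it below -/
import Mathlib

section
/- If f is analytic on the open unit disk with |f(z)| ≤ 1 for all |z| < 1 and f(z) = ∑_{k=0}^∞ a_k z^k, then for every k ≥ 1 one has |a_k| ≤ 1 - |a_0|^2. -/
/-!
Averaging `f` over the rotations `z ↦ ω ^ j * z` by the `k`-th roots of unity kills every
coefficient except the `a (m * k)`, so `h w = ∑ a (m * k) * w ^ m` (evaluated at `w = z ^ k`)
is again a holomorphic map of the disk into the closed disk, with `h 0 = a 0` and `h' 0 = a k`.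
This reduces the claim to `k = 1`, the Schwarz–Pick bound `‖h' 0‖ ≤ 1 - ‖h 0‖ ^ 2`: compose `h`
with the disk automorphism `w ↦ (w - c) / (1 - c̄ w)`, `c = h 0`, and apply the Schwarz lemma.
-/

open Metric Complex ComplexConjugate Topology FormalMultilinearSeries Finset

theorem IsPrimitiveRoot.sum_pow_pow_eq_ite {R : Type*} [CommRing R] [IsDomain R] {ω : R} {k : ℕ}
    (hω : IsPrimitiveRoot ω k) (n : ℕ) :
    ∑ j ∈ range k, (ω ^ n) ^ j = if k ∣ n then (k : R) else 0 := by
  split_ifs with hkn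
  · simp [(hω.pow_eq_one_iff_dvd n).2 hkn]
  · have hne : 1 - ω ^ n ≠ 0 := sub_ne_zero.2 (Ne.symm (mt (hω.pow_eq_one_iff_dvd n).1 hkn))
    refine (mul_eq_zero.1 ?_).resolve_left hne
    rw [mul_neg_geom_sum, ← pow_mul, mul_comm, pow_mul, hω.pow_eq_one, one_pow, sub_self]

theorem IsPrimitiveRoot.hasSum_comp_mul_of_hasSum {𝕜 : Type*} [NormedField 𝕜] [CharZero 𝕜]
    {ω z : 𝕜} {k : ℕ} (hω : IsPrimitiveRoot ω k) (hk : 0 < k) {a s : ℕ → 𝕜}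
    (h : ∀ j < k, HasSum (fun n => a n * (ω ^ j * z) ^ n) (s j)) :
    HasSum (fun m => a (m * k) * (z ^ k) ^ m) ((k : 𝕜)⁻¹ * ∑ j ∈ range k, s j) := by
  have hfilter : HasSum (fun n => if k ∣ n then a n * z ^ n else 0)
      ((k : 𝕜)⁻¹ * ∑ j ∈ range k, s j) := by
    refine (congrArg (HasSum · _) (funext fun n => ?_)).mp
      ((hasSum_sum fun j hj => h j (mem_range.1 hj)).mul_left (k : 𝕜)⁻¹)
    have hterm : ∑ j ∈ range k, a n * (ω ^ j * z) ^ n =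
        a n * z ^ n * ∑ j ∈ range k, (ω ^ n) ^ j := by
      rw [mul_sum]
      refine sum_congr rfl fun j _ => ?_
      ring
    rw [hterm, hω.sum_pow_pow_eq_ite]
    have hk' : (k : 𝕜) ≠ 0 := by exact_mod_cast hk.ne'
    split_ifs
    · field_simp
    · simp
  rw [← (mul_left_injective₀ hk.ne').hasSum_iff] at hfilter
  · simpa [Function.comp_def, ← pow_mul, mul_comm k] using hfilter
  · rintro n hn
    rw [if_neg]
    rintro ⟨m, rfl⟩
    exact hn ⟨m, mul_comm _ _⟩

theorem norm_sub_le_norm_one_sub_conj_mul {w c : ℂ} (hw : ‖w‖ ≤ 1) (hc : ‖c‖ ≤ 1) :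
    ‖w - c‖ ≤ ‖1 - conj c * w‖ := by
  have key : normSq (1 - conj c * w) - normSq (w - c) = (1 - normSq c) * (1 - normSq w) := by
    simp only [normSq_apply, sub_re, sub_im, mul_re, mul_im, conj_re, conj_im, one_re, one_im]
    ring
  have hc' : normSq c ≤ 1 := by rw [normSq_eq_norm_sq]; exact pow_le_one₀ (norm_nonneg c) hc
  have hw' : normSq w ≤ 1 := by rw [normSq_eq_norm_sq]; exact pow_le_one₀ (norm_nonneg w) hw
  rw [← sq_le_sq₀ (norm_nonneg _) (norm_nonneg _), ← normSq_eq_norm_sq, ← normSq_eq_norm_sq]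
  nlinarith [mul_nonneg (sub_nonneg.2 hc') (sub_nonneg.2 hw')]

theorem hasFPowerSeriesOnBall_ofScalars_of_hasSum {f : ℂ → ℂ} {a : ℕ → ℂ}
    (hsum : ∀ z ∈ ball (0 : ℂ) 1, HasSum (fun n => a n * z ^ n) (f z)) :
    HasFPowerSeriesOnBall f (ofScalars ℂ a) 0 1 where
  r_le := by
    refine ENNReal.le_of_forall_nnreal_lt fun r hr => ?_
    have hr1 : (r : ℝ) < 1 := by exact_mod_cast hr
    refine (ofScalars ℂ a).le_radius_of_tendsto (l := 0) ?_
    have := (hsum r (by simpa [abs_of_nonneg r.coe_nonneg] using hr1)).summable.tendsto_atTop_zero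
    simpa [ofScalars_norm] using this.norm
  r_pos := one_pos
  hasSum {y} hy := by
    rw [← ENNReal.coe_one, Metric.eball_coe] at hy
    simpa [ofScalars_apply_eq, mul_comm] using hsum y hy

theorem norm_deriv_zero_le_one_sub_norm_sq {f : ℂ → ℂ} (hd : DifferentiableOn ℂ f (ball 0 1))
    (hb : ∀ z ∈ ball (0 : ℂ) 1, ‖f z‖ ≤ 1) :
    ‖deriv f 0‖ ≤ 1 - ‖f 0‖ ^ 2 := by
  set c := f 0
  have h0 : (0 : ℂ) ∈ ball (0 : ℂ) 1 := mem_ball_self one_pos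
  rcases (hb 0 h0).lt_or_eq with hc | hc
  · have hden : ∀ z ∈ ball (0 : ℂ) 1, 1 - conj c * f z ≠ 0 := by
      intro z hz
      have : ‖conj c * f z‖ < 1 := by
        rw [norm_mul, Complex.norm_conj]
        nlinarith [hb z hz, norm_nonneg c, norm_nonneg (f z)]
      exact sub_ne_zero.2 fun h => by simp [← h] at this
    set φ : ℂ → ℂ := fun z => (f z - c) / (1 - conj c * f z)
    have hφd : DifferentiableOn ℂ φ (ball 0 1) :=
      (hd.sub_const c).div ((differentiableOn_const 1).sub (hd.const_mul _)) hden
    have hφb : Set.MapsTo φ (ball 0 1) (closedBall (φ 0) 1) := by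
      intro z hz
      rw [mem_closedBall, show φ 0 = 0 by simp [φ, c], dist_zero_right, norm_div,
        div_le_one (norm_pos_iff.2 (hden z hz))]
      exact norm_sub_le_norm_one_sub_conj_mul (hb z hz) hc.le
    have hderiv : deriv φ 0 = deriv f 0 / (1 - ‖c‖ ^ 2 : ℝ) := by
      have hf' : HasDerivAt f (deriv f 0) 0 :=
        (hd.differentiableAt (isOpen_ball.mem_nhds h0)).hasDerivAt
      have hφ' : HasDerivAt φ ((deriv f 0 * (1 - conj c * c) - (c - c) * -(conj c * deriv f 0))
          / (1 - conj c * c) ^ 2) 0 :=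
        (hf'.sub_const c).div ((hf'.const_mul (conj c)).const_sub 1) (hden 0 h0)
      have : (1 : ℂ) - conj c * c ≠ 0 := hden 0 h0
      rw [hφ'.deriv, sub_self, zero_mul, sub_zero, sq, ← div_div, mul_div_cancel_right₀ _ this]
      push_cast
      rw [← conj_mul']
    have hpos : 0 < 1 - ‖c‖ ^ 2 := by nlinarith [norm_nonneg c]
    have := norm_deriv_le_one_of_mapsTo_ball hφd hφb one_pos
    rwa [hderiv, norm_div, norm_real, Real.norm_of_nonneg hpos.le, div_le_one hpos] at this
  · have hmax : IsMaxOn (norm ∘ f) (ball 0 1) 0 := fun z hz => by simpa [hc] using hb z hz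
    have hconst : f =ᶠ[𝓝 0] fun _ => c := by
      filter_upwards [isOpen_ball.mem_nhds h0] with z hz
      exact eqOn_of_isPreconnected_of_isMaxOn_norm (convex_ball 0 1).isPreconnected isOpen_ball
        hd h0 hmax hz
    simp [hconst.deriv_eq, c, hc]

theorem norm_coeff_one_le_one_sub_norm_coeff_zero_sq {f : ℂ → ℂ} {a : ℕ → ℂ}
    (hsum : ∀ z ∈ ball (0 : ℂ) 1, HasSum (fun n => a n * z ^ n) (f z))
    (hb : ∀ z ∈ ball (0 : ℂ) 1, ‖f z‖ ≤ 1) :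
    ‖a 1‖ ≤ 1 - ‖a 0‖ ^ 2 := by
  have hp := hasFPowerSeriesOnBall_ofScalars_of_hasSum hsum
  have hd : DifferentiableOn ℂ f (ball 0 1) := by
    simpa [← ENNReal.coe_one, Metric.eball_coe] using hp.differentiableOn
  have h0 : f 0 = a 0 := by simpa using (hp.coeff_zero fun _ => 0).symm
  have h1 : deriv f 0 = a 1 := by simp [hp.hasFPowerSeriesAt.deriv]
  simpa [h0, h1] using norm_deriv_zero_le_one_sub_norm_sq hd hb

theorem exists_hasSum_comp_mul_norm_le_one {f : ℂ → ℂ} {a : ℕ → ℂ} {k : ℕ} (hk : 0 < k)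
    (hsum : ∀ z ∈ ball (0 : ℂ) 1, HasSum (fun n => a n * z ^ n) (f z))
    (hb : ∀ z ∈ ball (0 : ℂ) 1, ‖f z‖ ≤ 1) {w : ℂ} (hw : w ∈ ball (0 : ℂ) 1) :
    ∃ s, HasSum (fun m => a (m * k) * w ^ m) s ∧ ‖s‖ ≤ 1 := by
  obtain ⟨z, rfl⟩ := IsAlgClosed.exists_pow_nat_eq w hk
  obtain ⟨ω, hω⟩ : ∃ ω : ℂ, IsPrimitiveRoot ω k := ⟨_, isPrimitiveRoot_exp k hk.ne'⟩
  have hz : ‖z‖ < 1 := by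
    rw [mem_ball_zero_iff, norm_pow] at hw
    exact (pow_lt_one_iff_of_nonneg (norm_nonneg z) hk.ne').1 hw
  have hmem : ∀ j : ℕ, ω ^ j * z ∈ ball (0 : ℂ) 1 := by
    simp [norm_pow, hω.norm'_eq_one hk.ne', hz]
  refine ⟨_, hω.hasSum_comp_mul_of_hasSum hk fun j _ => hsum _ (hmem j), ?_⟩
  have hk' : (0 : ℝ) < k := by exact_mod_cast hk
  calc ‖(k : ℂ)⁻¹ * ∑ j ∈ range k, f (ω ^ j * z)‖
      ≤ (k : ℝ)⁻¹ * ∑ _j ∈ range k, (1 : ℝ) := by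
        rw [norm_mul, norm_inv, norm_natCast]
        gcongr
        exact (norm_sum_le _ _).trans (sum_le_sum fun j _ => hb _ (hmem j))
    _ = 1 := by simp [hk'.ne']

open Metric in
theorem stmt1_general (f : ℂ → ℂ) (a : ℕ → ℂ)
    (hb : ∀ z ∈ ball (0 : ℂ) 1, ‖f z‖ ≤ 1)
    (hsum : ∀ z ∈ ball (0 : ℂ) 1, HasSum (fun k : ℕ => a k * z ^ k) (f z)) :
    ∀ k : ℕ, 1 ≤ k → ‖a k‖ ≤ 1 - ‖a 0‖ ^ 2 := by
  intro k hk
  have hsub : ∀ w ∈ ball (0 : ℂ) 1, ∃ s, HasSum (fun m => a (m * k) * w ^ m) s ∧ ‖s‖ ≤ 1 :=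
    fun w hw => exists_hasSum_comp_mul_norm_le_one hk hsum hb hw
  have hsum' : ∀ w ∈ ball (0 : ℂ) 1,
      HasSum (fun m => a (m * k) * w ^ m) (∑' m, a (m * k) * w ^ m) :=
    fun w hw => (hsub w hw).choose_spec.1.summable.hasSum
  have hb' : ∀ w ∈ ball (0 : ℂ) 1, ‖∑' m, a (m * k) * w ^ m‖ ≤ 1 := fun w hw => by
    obtain ⟨s, hs, hs1⟩ := hsub w hw
    rwa [hs.tsum_eq]
  simpa using norm_coeff_one_le_one_sub_norm_coeff_zero_sq hsum' hb'

open Metric in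
/-- If `f` is analytic on the unit disk, bounded by `1`, with Taylor coefficients
`a k`, then `|a k| ≤ 1 - |a 0|²` for all `k ≥ 1`. -/
theorem stmt1 (f : ℂ → ℂ) (a : ℕ → ℂ)
    (hf : DifferentiableOn ℂ f (ball (0 : ℂ) 1))
    (hb : ∀ z ∈ ball (0 : ℂ) 1, ‖f z‖ ≤ 1)
    (hsum : ∀ z ∈ ball (0 : ℂ) 1, HasSum (fun k : ℕ => a k * z ^ k) (f z)) :
    ∀ k : ℕ, 1 ≤ k → ‖a k‖ ≤ 1 - ‖a 0‖ ^ 2 :=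
  stmt1_general f a hb hsum
end

section
/- Let T_1, …, T_m be Hilbert-space operators with ∑_{j=1}^m T_j T_j^* ≤ I, and define Δ^{(k)} = ∑_{β ⊆ {1,…,k}} (-1)^{|β|} T^β (T^β)^* where T^β denotes the product of the T_j with j ∈ β (operators commuting). Then for every 1 ≤ k ≤ m one has I - ∑_{j=1}^k T_j T_j^* ≤ Δ^{(k)} ≤ I; in particular Δ^{(m)} ≥ 0. -/
/-!
Write `Δ_s` for the alternating sum over subsets of `s`. Splitting the subsets of `insert a s` by
whether they contain `a` gives `Δ_{insert a s} = Δ_s - T_a Δ_s T_a*`. If `1 - ∑_{j∈s} T_j T_j* ≤ Δ_s ≤ 1`,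
conjugating `Δ_s ≤ 1` by `T_a` gives the lower bound for `insert a s`, and `0 ≤ Δ_s` (from the lower
bound and the row-contraction hypothesis) gives the upper bound. Only the order of a star-ordered
algebra is used, so the argument is carried out there and specialised to `H →L[ℂ] H` at the end.
-/

open Finset Function

section Defect

variable {ι A : Type*} [Ring A] [StarRing A] [Algebra ℂ A]
  (T : ι → A) (hcomm : Pairwise (Commute on T))

/-- `defect T hcomm {j | j < k}` is the paper's `Δ^{(k)}` (indices start at `0`). -/
def defect (s : Finset ι) : A :=
  ∑ β ∈ s.powerset, ((-1 : ℂ) ^ β.card) •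
    (β.noncommProd T (hcomm.set_pairwise _) * star (β.noncommProd T (hcomm.set_pairwise _)))

@[simp]
lemma defect_empty : defect T hcomm ∅ = 1 := by
  rw [defect, powerset_empty, sum_singleton, noncommProd_empty, star_one, mul_one, card_empty,
    pow_zero, one_smul]

lemma defect_insert [DecidableEq ι] {a : ι} {s : Finset ι} (ha : a ∉ s) :
    defect T hcomm (insert a s) = defect T hcomm s - T a * defect T hcomm s * star (T a) := by
  rw [defect, sum_powerset_insert ha, sub_eq_add_neg, defect, mul_sum, sum_mul, ← sum_neg_distrib]
  congr 1
  refine sum_congr rfl fun β hβ => ?_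
  have haβ : a ∉ β := fun h => ha (mem_powerset.1 hβ h)
  rw [noncommProd_insert_of_notMem _ _ _ _ haβ, card_insert_of_notMem haβ, pow_succ, mul_neg_one,
    neg_smul, star_mul, mul_smul_comm, smul_mul_assoc]
  simp only [mul_assoc]

variable [PartialOrder A] [StarOrderedRing A]

theorem defect_bounds {s : Finset ι} (hs : ∑ j ∈ s, T j * star (T j) ≤ 1) :
    1 - ∑ j ∈ s, T j * star (T j) ≤ defect T hcomm s ∧ defect T hcomm s ≤ 1 := by
  classical
  induction s using Finset.induction_on with
  | empty => simp
  | insert a s ha ih =>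
    rw [sum_insert ha] at hs ⊢
    have hrow : ∑ j ∈ s, T j * star (T j) ≤ 1 :=
      le_trans (le_add_of_nonneg_left (mul_star_self_nonneg (T a))) hs
    obtain ⟨hlower, hupper⟩ := ih hrow
    have hnonneg : 0 ≤ defect T hcomm s := (sub_nonneg.2 hrow).trans hlower
    rw [defect_insert T hcomm ha]
    constructor
    · have hconj : T a * defect T hcomm s * star (T a) ≤ T a * star (T a) := by
        simpa using star_right_conjugate_le_conjugate hupper (T a)
      calc 1 - (T a * star (T a) + ∑ j ∈ s, T j * star (T j))
          = (1 - ∑ j ∈ s, T j * star (T j)) - T a * star (T a) := by abel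
        _ ≤ defect T hcomm s - T a * defect T hcomm s * star (T a) := sub_le_sub hlower hconj
    · exact (sub_le_self _ (star_right_conjugate_nonneg hnonneg (T a))).trans hupper

theorem defect_nonneg {s : Finset ι} (hs : ∑ j ∈ s, T j * star (T j) ≤ 1) :
    0 ≤ defect T hcomm s :=
  (sub_nonneg.2 hs).trans (defect_bounds T hcomm hs).1

end Defect

open ContinuousLinearMap in
/-- If `T 1, …, T m` are commuting operators with `∑ T j T j* ≤ I`, and
`Δ^{(k)} = ∑_{β ⊆ {1,…,k}} (-1)^{|β|} T^β (T^β)*`, then for `1 ≤ k ≤ m` one has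
`I - ∑_{j≤k} T j T j* ≤ Δ^{(k)} ≤ I`; in particular `Δ^{(m)} ≥ 0`. -/
theorem stmt6 {H : Type*} [NormedAddCommGroup H] [InnerProductSpace ℂ H] [CompleteSpace H]
    (m : ℕ) (T : Fin m → H →L[ℂ] H)
    (hcomm : ∀ i j, Commute (T i) (T j))
    (hT : (1 - ∑ j, T j * adjoint (T j)).IsPositive) :
    ∀ k : ℕ, 1 ≤ k → k ≤ m →
      ((∑ β ∈ (Finset.univ.filter fun j : Fin m => (j : ℕ) < k).powerset,
            ((-1 : ℂ) ^ β.card) •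
              (β.noncommProd T (fun a _ b _ _ => hcomm a b) *
                adjoint (β.noncommProd T (fun a _ b _ _ => hcomm a b)))) -
          (1 - ∑ j ∈ Finset.univ.filter fun j : Fin m => (j : ℕ) < k,
            T j * adjoint (T j))).IsPositive ∧
      (1 - ∑ β ∈ (Finset.univ.filter fun j : Fin m => (j : ℕ) < k).powerset,
            ((-1 : ℂ) ^ β.card) •
              (β.noncommProd T (fun a _ b _ _ => hcomm a b) *
                adjoint (β.noncommProd T (fun a _ b _ _ => hcomm a b)))).IsPositive ∧
      (∑ β : Finset (Fin m),
            ((-1 : ℂ) ^ β.card) •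
              (β.noncommProd T (fun a _ b _ _ => hcomm a b) *
                adjoint (β.noncommProd T (fun a _ b _ _ => hcomm a b)))).IsPositive := by
  intro k _ _
  simp only [← star_eq_adjoint, ← nonneg_iff_isPositive, sub_nonneg] at hT ⊢
  have hrow : ∑ j ∈ univ.filter fun j : Fin m => (j : ℕ) < k, T j * star (T j) ≤ 1 :=
    (sum_le_sum_of_subset_of_nonneg (subset_univ _)
      fun j _ _ => mul_star_self_nonneg (T j)).trans hT
  obtain ⟨hlower, hupper⟩ := defect_bounds T (fun i j _ => hcomm i j) hrow
  have hfull := defect_nonneg T (fun i j _ => hcomm i j) hT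
  simp only [defect, powerset_univ] at hfull
  exact ⟨hlower, hupper, hfull⟩
end

section
/- If T_1, …, T_m are commuting operators on a Hilbert space with ‖T_j‖ ≤ 1/√m for each j, then the defect operator Δ = ∑_{β ⊆ {1,…,m}} (-1)^{|β|} T^β (T^β)^* is positive semidefinite. -/
/-!
Write `Δ(s) = ∑_{β ⊆ s} (-1)^{|β|} T^β (T^β)*`. Splitting the subsets of `s ∪ {j}` according
to whether they contain `j` gives `Δ(s ∪ {j}) = Δ(s) - T_j Δ(s) T_j*`. From this, by induction
on `s`, one gets `1 - ∑_{i ∈ s} T_i T_i* ≤ Δ(s) ≤ 1` as long as `∑_{i ∈ s} T_i T_i* ≤ 1`, which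
holds when `‖T_j‖ ≤ 1/√m`, since `T_j T_j* ≤ ‖T_j‖²`. So `Δ` is nonnegative.
-/

open Finset

namespace CommutingFamily

variable {R ι : Type*}

section Monoid

variable [Monoid R] (T : ι → R) (hcomm : ∀ i j, Commute (T i) (T j))

def prod (β : Finset ι) : R :=
  β.noncommProd T (fun a _ b _ _ => hcomm a b)

@[simp]
lemma prod_empty : prod T hcomm ∅ = 1 :=
  noncommProd_empty _ _

lemma prod_insert [DecidableEq ι] {j : ι} {β : Finset ι} (hj : j ∉ β) :
    prod T hcomm (insert j β) = T j * prod T hcomm β :=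
  noncommProd_insert_of_notMem _ _ _ _ hj

end Monoid

section StarRing

variable [Ring R] [StarRing R] (T : ι → R) (hcomm : ∀ i j, Commute (T i) (T j))

def defect (s : Finset ι) : R :=
  ∑ β ∈ s.powerset, (-1 : ℤ) ^ β.card • (prod T hcomm β * star (prod T hcomm β))

@[simp]
lemma defect_empty : defect T hcomm ∅ = 1 := by
  simp [defect]

lemma defect_insert [DecidableEq ι] {j : ι} {s : Finset ι} (hj : j ∉ s) :
    defect T hcomm (insert j s) = defect T hcomm s - T j * defect T hcomm s * star (T j) := by
  rw [defect, sum_powerset_insert hj, sub_eq_add_neg, defect, mul_sum, sum_mul,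
    ← sum_neg_distrib]
  congr 1
  refine sum_congr rfl fun β hβ => ?_
  have hjβ : j ∉ β := fun h => hj (mem_powerset.1 hβ h)
  rw [card_insert_of_notMem hjβ, prod_insert T hcomm hjβ, star_mul, pow_succ, mul_neg_one,
    neg_smul, mul_smul_comm, smul_mul_assoc]
  simp only [mul_assoc]

variable [PartialOrder R] [StarOrderedRing R]

/-- The lower bound keeps the conjugate `T_j Δ(s) T_j*` nonnegative, and the upper bound
dominates it by `T_j T_j*`; each bound feeds the other through the recursion. -/
lemma one_sub_sum_le_defect_and_defect_le_one {s : Finset ι}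
    (hs : ∑ i ∈ s, T i * star (T i) ≤ 1) :
    1 - ∑ i ∈ s, T i * star (T i) ≤ defect T hcomm s ∧ defect T hcomm s ≤ 1 := by
  classical
  induction s using Finset.induction_on with
  | empty => simp
  | @insert j s hj ih =>
    rw [sum_insert hj] at hs ⊢
    have hs' : ∑ i ∈ s, T i * star (T i) ≤ 1 :=
      (le_add_of_nonneg_left (mul_star_self_nonneg _)).trans hs
    obtain ⟨hlower, hupper⟩ := ih hs'
    have hnonneg : 0 ≤ defect T hcomm s := (sub_nonneg.2 hs').trans hlower
    have hconj : T j * defect T hcomm s * star (T j) ≤ T j * star (T j) := by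
      simpa using star_right_conjugate_le_conjugate hupper (T j)
    rw [defect_insert T hcomm hj]
    constructor
    · calc 1 - (T j * star (T j) + ∑ i ∈ s, T i * star (T i))
          = (1 - ∑ i ∈ s, T i * star (T i)) - T j * star (T j) := by abel
        _ ≤ _ := sub_le_sub hlower hconj
    · exact (sub_le_self _ (star_right_conjugate_nonneg hnonneg _)).trans hupper

lemma defect_nonneg {s : Finset ι} (hs : ∑ i ∈ s, T i * star (T i) ≤ 1) :
    0 ≤ defect T hcomm s :=
  (sub_nonneg.2 hs).trans (one_sub_sum_le_defect_and_defect_le_one T hcomm hs).1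

end StarRing

end CommutingFamily

lemma CStarAlgebra.sum_mul_star_le_one {A ι : Type*} [CStarAlgebra A] [PartialOrder A]
    [StarOrderedRing A] {a : ι → A} {s : Finset ι} (ha : ∑ i ∈ s, ‖a i‖ ^ 2 ≤ 1) :
    ∑ i ∈ s, a i * star (a i) ≤ 1 :=
  calc ∑ i ∈ s, a i * star (a i) ≤ ∑ i ∈ s, algebraMap ℝ A (‖a i‖ ^ 2) :=
        sum_le_sum fun _ _ => CStarAlgebra.mul_star_le_algebraMap_norm_sq
    _ = algebraMap ℝ A (∑ i ∈ s, ‖a i‖ ^ 2) := (map_sum _ _ _).symm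
    _ ≤ algebraMap ℝ A 1 := algebraMap_mono A ha
    _ = 1 := map_one _

lemma sum_sq_le_one_of_le_one_div_sqrt {m : ℕ} {x : Fin m → ℝ} (hx0 : ∀ j, 0 ≤ x j)
    (hx : ∀ j, x j ≤ 1 / √m) : ∑ j, x j ^ 2 ≤ 1 := by
  rcases m.eq_zero_or_pos with rfl | hm
  · simp
  calc ∑ j, x j ^ 2 ≤ ∑ _j : Fin m, (1 / √m) ^ 2 :=
        sum_le_sum fun j _ => pow_le_pow_left₀ (hx0 j) (hx j) 2
    _ = 1 := by
      rw [sum_const, card_univ, Fintype.card_fin, div_pow, Real.sq_sqrt m.cast_nonneg,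
        nsmul_eq_mul]
      field_simp

open ContinuousLinearMap in
theorem stmt7_general {H : Type*} [NormedAddCommGroup H] [InnerProductSpace ℂ H] [CompleteSpace H]
    (m : ℕ) (T : Fin m → H →L[ℂ] H)
    (hcomm : ∀ i j, Commute (T i) (T j))
    (hT : ∀ j, ‖T j‖ ≤ 1 / Real.sqrt m) :
    (∑ β : Finset (Fin m),
        ((-1 : ℂ) ^ β.card) •
          (β.noncommProd T (fun a _ b _ _ => hcomm a b) *
            adjoint (β.noncommProd T (fun a _ b _ _ => hcomm a b)))).IsPositive := by
  have hsum : ∑ j, T j * star (T j) ≤ 1 :=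
    CStarAlgebra.sum_mul_star_le_one
      (sum_sq_le_one_of_le_one_div_sqrt (fun _ => norm_nonneg _) hT)
  have hΔ := CommutingFamily.defect_nonneg T hcomm hsum
  rw [CommutingFamily.defect, powerset_univ, nonneg_iff_isPositive] at hΔ
  convert hΔ using 3 with β
  rw [star_eq_adjoint, ← Int.cast_smul_eq_zsmul ℂ]
  push_cast
  rfl

open ContinuousLinearMap in
/-- If `T 1, …, T m` are commuting operators with `‖T j‖ ≤ 1/√m`, then the defect
operator `Δ = ∑_{β ⊆ {1,…,m}} (-1)^{|β|} T^β (T^β)*` is positive semidefinite. -/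
theorem stmt7 {H : Type*} [NormedAddCommGroup H] [InnerProductSpace ℂ H] [CompleteSpace H]
    (m : ℕ) (hm : 1 ≤ m) (T : Fin m → H →L[ℂ] H)
    (hcomm : ∀ i j, Commute (T i) (T j))
    (hT : ∀ j, ‖T j‖ ≤ 1 / Real.sqrt m) :
    (∑ β : Finset (Fin m),
        ((-1 : ℂ) ^ β.card) •
          (β.noncommProd T (fun a _ b _ _ => hcomm a b) *
            adjoint (β.noncommProd T (fun a _ b _ _ => hcomm a b)))).IsPositive :=
  stmt7_general m T hcomm hT
end
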